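/- arXiv:1110.1911 — 2 statements merged into one kernel-verified Lean document; each statement's English description precedes it below -/
import Mathlib

section
/- Let X be a compact metric space with diameter at most 1, let T : X → X be a topologically transitive homeomorphism satisfying the closing property, and let α ∈ (0,1]. Then there exists a constant K > 0, depending only on X, T and α, such that for every α-Hölder-continuous function ψ : X → ℂ satisfying the periodic orbit obstruction condition (Σ_{j=0}^{k−1} ψ(T^j p) = 0 whenever T^k p = p), there exists an α-Hölder-continuous function φ : X → ℂ with φ(T x) − φ(x) = ψ(x) for all x ∈ X and with Hölder seminorm [φ]_α ≤ K·([ψ]_α + ‖ψ‖), where ‖ψ‖ = sup_{x ∈ X}|ψ(x)|. -/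
/-!
Let `g n = ∑_{j<n} ψ (T^j x₀)` be the Birkhoff sums along a dense orbit. If `T^m x₀` and
`T^(m+k) x₀` are δ₀-close, the closing property yields a periodic orbit shadowing
`T^m x₀, …, T^(m+k) x₀` with an error decaying exponentially away from both ends; since `ψ` sums
to zero along it, Hölder continuity bounds `g (m+k) - g m` by a geometric series times `dist ^ α`.
A finite initial segment of the orbit is δ₀-dense, which makes `g` bounded and handles far-apart
pairs. Hence `T^n x₀ ↦ g n` is α-Hölder on the dense orbit; its continuous extension `φ` to `X`
satisfies `φ ∘ T - φ = ψ` on the orbit, hence everywhere.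
-/

open Filter Topology

section Holder

variable {X Y : Type*} [PseudoMetricSpace X] {α B : ℝ}

theorem uniformContinuous_of_dist_le_mul_rpow [PseudoMetricSpace Y] {f : X → Y} (hα : 0 < α)
    (hf : ∀ x y, dist (f x) (f y) ≤ B * dist x y ^ α) : UniformContinuous f := by
  have hlim : Tendsto (fun t : ℝ => B * t ^ α) (𝓝 0) (𝓝 0) := by
    simpa [Real.zero_rpow hα.ne'] using
      ((Real.continuousAt_rpow_const 0 α (Or.inr hα.le)).const_mul B).tendsto
  refine Metric.uniformContinuous_iff.2 fun ε hε => ?_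
  obtain ⟨δ, hδ, hδε⟩ := Metric.tendsto_nhds_nhds.1 hlim ε hε
  refine ⟨δ, hδ, fun {a b} hab => (hf a b).trans_lt ?_⟩
  have := hδε (x := dist a b) (by rwa [Real.dist_eq, sub_zero, abs_of_nonneg dist_nonneg])
  rw [Real.dist_eq, sub_zero] at this
  exact (le_abs_self _).trans_lt this

theorem Dense.exists_extend_of_dist_le_mul_rpow [MetricSpace Y] [CompleteSpace Y] {S : Set X}
    (hS : Dense S) {f : S → Y} (hα : 0 < α)
    (hf : ∀ s t : S, dist (f s) (f t) ≤ B * dist s t ^ α) :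
    ∃ φ : X → Y, (∀ s : S, φ s = f s) ∧ ∀ x y, dist (φ x) (φ y) ≤ B * dist x y ^ α := by
  have hfu := uniformContinuous_of_dist_le_mul_rpow hα hf
  have hφ := uniformly_extend_of_ind (isUniformInducing_val S) hS.denseRange_val hfu
  have hφu := uniformContinuous_uniformly_extend (isUniformInducing_val S) hS.denseRange_val hfu
  refine ⟨_, hφ, isClosed_property2 hS.denseRange_val ?_ fun s t => by rw [hφ, hφ]; exact hf s t⟩
  exact isClosed_le (hφu.continuous.fst'.dist hφu.continuous.snd')
    (continuous_const.mul ((continuous_fst.dist continuous_snd).rpow_const fun _ => Or.inr hα.le))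

theorem DenseRange.exists_extend_of_dist_le_mul_rpow [MetricSpace Y] [CompleteSpace Y]
    {ι : Type*} {u : ι → X} (hu : DenseRange u) {g : ι → Y} (hα : 0 < α)
    (hg : ∀ m n, dist (g m) (g n) ≤ B * dist (u m) (u n) ^ α) :
    ∃ φ : X → Y, (∀ n, φ (u n) = g n) ∧ ∀ x y, dist (φ x) (φ y) ≤ B * dist x y ^ α := by
  let f : Set.range u → Y := fun s => g s.2.choose
  have hf : ∀ s t : Set.range u, dist (f s) (f t) ≤ B * dist s t ^ α := fun s t => by
    have := hg s.2.choose t.2.choose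
    rwa [s.2.choose_spec, t.2.choose_spec] at this
  have hfu : ∀ n, f ⟨u n, n, rfl⟩ = g n := fun n => dist_le_zero.1 <| by
    simpa [(⟨u n, n, rfl⟩ : Set.range u).2.choose_spec, Real.zero_rpow hα.ne'] using
      hg (⟨u n, n, rfl⟩ : Set.range u).2.choose n
  obtain ⟨φ, hφf, hφ⟩ := Dense.exists_extend_of_dist_le_mul_rpow hu hα hf
  exact ⟨φ, fun n => (hφf ⟨u n, n, rfl⟩).trans (hfu n), hφ⟩

theorem norm_sub_le_sInf_mul_rpow {E : Type*} [SeminormedAddCommGroup E] {f : X → E}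
    (h : {C : ℝ | 0 ≤ C ∧ ∀ x y, ‖f x - f y‖ ≤ C * dist x y ^ α}.Nonempty) (x y : X) :
    ‖f x - f y‖ ≤ sInf {C : ℝ | 0 ≤ C ∧ ∀ x y, ‖f x - f y‖ ≤ C * dist x y ^ α} * dist x y ^ α := by
  rcases (Real.rpow_nonneg (dist_nonneg (x := x) (y := y)) α).eq_or_lt with h0 | hpos
  · obtain ⟨C, -, hC⟩ := h
    simpa [← h0] using hC x y
  · rw [← div_le_iff₀ hpos]
    exact le_csInf h fun C hC => (div_le_iff₀ hpos).2 (hC.2 x y)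

end Holder

theorem DenseRange.exists_le_dist_lt {X : Type*} [PseudoMetricSpace X] [CompactSpace X]
    {u : ℕ → X} (hu : DenseRange u) {δ : ℝ} (hδ : 0 < δ) :
    ∃ M, ∀ x, ∃ i ≤ M, dist x (u i) < δ := by
  have hcover : Set.univ ⊆ ⋃ n, Metric.ball (u n) δ := fun x _ =>
    Set.mem_iUnion.2 (hu.exists_dist_lt x hδ)
  obtain ⟨t, ht⟩ := isCompact_univ.elim_finite_subcover _ (fun _ => Metric.isOpen_ball) hcover
  refine ⟨t.sup id, fun x => ?_⟩
  obtain ⟨i, hit, hx⟩ := Set.mem_iUnion₂.1 (ht (Set.mem_univ x))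
  exact ⟨i, Finset.le_sup (f := id) hit, hx⟩

theorem sum_pow_min_le {r : ℝ} (h0 : 0 ≤ r) (h1 : r < 1) (k : ℕ) :
    ∑ j ∈ Finset.range k, r ^ min j (k - j) ≤ 2 / (1 - r) := by
  have hterm : ∀ j ∈ Finset.range k, r ^ min j (k - j) ≤ r ^ j + r ^ (k - 1 - j) := fun j _ =>
    calc r ^ min j (k - j) ≤ r ^ min j (k - 1 - j) := pow_le_pow_of_le_one h0 h1.le (by omega)
      _ ≤ r ^ j + r ^ (k - 1 - j) := by
        rcases min_choice j (k - 1 - j) with h | h <;> rw [h] <;>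
          linarith [pow_nonneg h0 j, pow_nonneg h0 (k - 1 - j)]
  have hgeom : ∑ j ∈ Finset.range k, r ^ j ≤ 1 / (1 - r) := by
    have := (geom_sum_Ico_le_of_lt_one h0 h1 : ∑ j ∈ Finset.Ico 0 k, r ^ j ≤ r ^ 0 / (1 - r))
    rwa [← Finset.range_eq_Ico, pow_zero] at this
  calc ∑ j ∈ Finset.range k, r ^ min j (k - j)
      ≤ ∑ j ∈ Finset.range k, (r ^ j + r ^ (k - 1 - j)) := Finset.sum_le_sum hterm
    _ = 2 * ∑ j ∈ Finset.range k, r ^ j := by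
      rw [Finset.sum_add_distrib, Finset.sum_range_reflect (fun j => r ^ j) k, two_mul]
    _ ≤ 2 * (1 / (1 - r)) := by gcongr
    _ = 2 / (1 - r) := mul_one_div 2 (1 - r)

theorem norm_birkhoffSum_le_of_forall_norm_le {X E : Type*} [SeminormedAddCommGroup E]
    {T : X → X} {ψ : X → E} {N : ℝ} (hN : ∀ z, ‖ψ z‖ ≤ N) (n : ℕ) (x : X) :
    ‖birkhoffSum T ψ n x‖ ≤ n * N := by
  simpa [birkhoffSum] using norm_sum_le_of_le (Finset.range n) fun j _ => hN (T^[j] x)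

section Dynamics

variable {X E : Type*} [PseudoMetricSpace X] [SeminormedAddCommGroup E] {T : X → X} {ψ : X → E}

def HasClosingProperty (T : X → X) (c lam δ₀ : ℝ) : Prop :=
  ∀ (x : X) (k : ℕ), dist x (T^[k] x) < δ₀ →
    ∃ p : X, T^[k] p = p ∧ ∀ j ≤ k,
      dist (T^[j] x) (T^[j] p) ≤ c * dist x (T^[k] x) * Real.exp (-lam * (min j (k - j) : ℕ))

noncomputable def shadowingConst (c lam α : ℝ) : ℝ := c ^ α * (2 / (1 - Real.exp (-(lam * α))))

theorem shadowingConst_pos {c lam α : ℝ} (hc : 0 < c) (hlam : 0 < lam) (hα : 0 < α) :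
    0 < shadowingConst c lam α := by
  have : 0 < 1 - Real.exp (-(lam * α)) := sub_pos.2 (Real.exp_lt_one_iff.2 (by nlinarith))
  unfold shadowingConst
  positivity

theorem norm_birkhoffSum_le_of_shadowing {C α lam δ : ℝ} (hC : 0 ≤ C) (hα : 0 < α)
    (hlam : 0 < lam) (hδ : 0 ≤ δ) (hψ : ∀ x y, ‖ψ x - ψ y‖ ≤ C * dist x y ^ α) {x p : X} {k : ℕ}
    (hp : birkhoffSum T ψ k p = 0)
    (hshadow : ∀ j ≤ k, dist (T^[j] x) (T^[j] p) ≤ δ * Real.exp (-lam * (min j (k - j) : ℕ))) :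
    ‖birkhoffSum T ψ k x‖ ≤ 2 / (1 - Real.exp (-(lam * α))) * C * δ ^ α := by
  set r := Real.exp (-(lam * α))
  have hr : r < 1 := Real.exp_lt_one_iff.2 (by nlinarith)
  have hterm : ∀ j ∈ Finset.range k,
      ‖ψ (T^[j] x) - ψ (T^[j] p)‖ ≤ C * δ ^ α * r ^ min j (k - j) := fun j hj => calc
    _ ≤ C * dist (T^[j] x) (T^[j] p) ^ α := hψ _ _
    _ ≤ C * (δ * Real.exp (-lam * (min j (k - j) : ℕ))) ^ α := by
      gcongr
      exact hshadow j (Finset.mem_range.1 hj).le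
    _ = C * δ ^ α * r ^ min j (k - j) := by
      rw [Real.mul_rpow hδ (Real.exp_nonneg _), ← Real.exp_mul, ← Real.exp_nat_mul]
      ring_nf
  calc ‖birkhoffSum T ψ k x‖
      = ‖∑ j ∈ Finset.range k, (ψ (T^[j] x) - ψ (T^[j] p))‖ := by
        rw [Finset.sum_sub_distrib, ← birkhoffSum, ← birkhoffSum, hp, sub_zero]
    _ ≤ ∑ j ∈ Finset.range k, C * δ ^ α * r ^ min j (k - j) := norm_sum_le_of_le _ hterm
    _ = C * δ ^ α * ∑ j ∈ Finset.range k, r ^ min j (k - j) := (Finset.mul_sum ..).symm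
    _ ≤ C * δ ^ α * (2 / (1 - r)) := by
      gcongr
      exact sum_pow_min_le (Real.exp_nonneg _) hr k
    _ = 2 / (1 - r) * C * δ ^ α := by ring

theorem norm_birkhoffSum_le_of_closing {c lam δ₀ C α : ℝ} (hcl : HasClosingProperty T c lam δ₀)
    (hc : 0 ≤ c) (hlam : 0 < lam) (hα : 0 < α) (hC : 0 ≤ C)
    (hψ : ∀ x y, ‖ψ x - ψ y‖ ≤ C * dist x y ^ α)
    (hobs : ∀ p k, T^[k] p = p → birkhoffSum T ψ k p = 0) {x : X} {k : ℕ}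
    (hx : dist x (T^[k] x) < δ₀) :
    ‖birkhoffSum T ψ k x‖ ≤ shadowingConst c lam α * C * dist x (T^[k] x) ^ α := by
  obtain ⟨p, hp, hshadow⟩ := hcl x k hx
  calc ‖birkhoffSum T ψ k x‖
      ≤ 2 / (1 - Real.exp (-(lam * α))) * C * (c * dist x (T^[k] x)) ^ α :=
        norm_birkhoffSum_le_of_shadowing hC hα hlam (by positivity) hψ (hobs p k hp) hshadow
    _ = shadowingConst c lam α * C * dist x (T^[k] x) ^ α := by
        rw [shadowingConst, Real.mul_rpow hc dist_nonneg]; ring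

variable {x₀ : X} {A δ₀ α : ℝ}

theorem norm_birkhoffSum_le_of_net {M : ℕ} {N : ℝ} (hA : 0 ≤ A) (hα : 0 ≤ α)
    (hN : ∀ z, ‖ψ z‖ ≤ N)
    (hloc : ∀ x k, dist x (T^[k] x) < δ₀ → ‖birkhoffSum T ψ k x‖ ≤ A * dist x (T^[k] x) ^ α)
    (hM : ∀ x, ∃ i ≤ M, dist x (T^[i] x₀) < δ₀) (n : ℕ) :
    ‖birkhoffSum T ψ n x₀‖ ≤ M * N + A * δ₀ ^ α := by
  have hN0 : 0 ≤ N := (norm_nonneg _).trans (hN x₀)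
  obtain ⟨i, hiM, hi⟩ := hM (T^[n] x₀)
  have hδ₀ : 0 ≤ δ₀ := dist_nonneg.trans hi.le
  have hiN : ‖birkhoffSum T ψ i x₀‖ ≤ M * N := (norm_birkhoffSum_le_of_forall_norm_le hN i x₀).trans
    (by gcongr)
  rcases le_or_gt i n with hin | hni
  · obtain ⟨k, rfl⟩ := Nat.exists_eq_add_of_le hin
    have hd : dist (T^[i] x₀) (T^[k] (T^[i] x₀)) < δ₀ := by
      rwa [← Function.iterate_add_apply, add_comm, dist_comm]
    calc ‖birkhoffSum T ψ (i + k) x₀‖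
        ≤ ‖birkhoffSum T ψ i x₀‖ + ‖birkhoffSum T ψ k (T^[i] x₀)‖ := by
          rw [birkhoffSum_add]; exact norm_add_le _ _
      _ ≤ M * N + A * δ₀ ^ α := by
          gcongr
          exact (hloc _ _ hd).trans (by gcongr)
  · calc ‖birkhoffSum T ψ n x₀‖ ≤ M * N :=
          (norm_birkhoffSum_le_of_forall_norm_le hN n x₀).trans (by gcongr; omega)
      _ ≤ M * N + A * δ₀ ^ α := le_add_of_nonneg_right (by positivity)

theorem norm_birkhoffSum_sub_le_of_bounded {G : ℝ} (hA : 0 ≤ A) (hδ₀ : 0 < δ₀) (hα : 0 ≤ α)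
    (hloc : ∀ x k, dist x (T^[k] x) < δ₀ → ‖birkhoffSum T ψ k x‖ ≤ A * dist x (T^[k] x) ^ α)
    (hG : ∀ n, ‖birkhoffSum T ψ n x₀‖ ≤ G) (m n : ℕ) :
    ‖birkhoffSum T ψ m x₀ - birkhoffSum T ψ n x₀‖ ≤
      (A + 2 * G / δ₀ ^ α) * dist (T^[m] x₀) (T^[n] x₀) ^ α := by
  have hnear : ∀ m n, dist (T^[m] x₀) (T^[n] x₀) < δ₀ →
      ‖birkhoffSum T ψ m x₀ - birkhoffSum T ψ n x₀‖ ≤ A * dist (T^[m] x₀) (T^[n] x₀) ^ α := by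
    intro m n hmn
    wlog hle : m ≤ n generalizing m n
    · rw [norm_sub_rev, dist_comm] at *
      exact this n m hmn (by omega)
    obtain ⟨k, rfl⟩ := Nat.exists_eq_add_of_le hle
    rw [add_comm, Function.iterate_add_apply] at hmn ⊢
    rw [add_comm, birkhoffSum_add, sub_add_cancel_left, norm_neg]
    exact hloc _ _ hmn
  have hG0 : 0 ≤ G := (norm_nonneg _).trans (hG 0)
  have hδα : 0 < δ₀ ^ α := Real.rpow_pos_of_pos hδ₀ α
  rcases lt_or_ge (dist (T^[m] x₀) (T^[n] x₀)) δ₀ with hlt | hfar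
  · exact (hnear m n hlt).trans (by gcongr; exact le_add_of_nonneg_right (by positivity))
  · calc ‖birkhoffSum T ψ m x₀ - birkhoffSum T ψ n x₀‖
        ≤ 2 * G / δ₀ ^ α * δ₀ ^ α := by
          rw [div_mul_cancel₀ _ hδα.ne', two_mul]
          exact (norm_sub_le _ _).trans (add_le_add (hG m) (hG n))
      _ ≤ (A + 2 * G / δ₀ ^ α) * dist (T^[m] x₀) (T^[n] x₀) ^ α := by
          gcongr
          exact le_add_of_nonneg_left hA

theorem norm_birkhoffSum_sub_le_of_closing {c lam C : ℝ} {M : ℕ} {N : ℝ}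
    (hcl : HasClosingProperty T c lam δ₀) (hc : 0 < c) (hlam : 0 < lam) (hδ₀ : 0 < δ₀)
    (hα : 0 < α) (hC : 0 ≤ C) (hψ : ∀ x y, ‖ψ x - ψ y‖ ≤ C * dist x y ^ α)
    (hobs : ∀ p k, T^[k] p = p → birkhoffSum T ψ k p = 0) (hN : ∀ z, ‖ψ z‖ ≤ N)
    (hM : ∀ x, ∃ i ≤ M, dist x (T^[i] x₀) < δ₀) (m n : ℕ) :
    ‖birkhoffSum T ψ m x₀ - birkhoffSum T ψ n x₀‖ ≤
      (3 * shadowingConst c lam α + 2 * M / δ₀ ^ α) * (C + N) *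
        dist (T^[m] x₀) (T^[n] x₀) ^ α := by
  set H := shadowingConst c lam α
  have hH : 0 < H := shadowingConst_pos hc hlam hα
  have hN0 : 0 ≤ N := (norm_nonneg _).trans (hN x₀)
  have hloc := fun x k => norm_birkhoffSum_le_of_closing (x := x) (k := k) hcl hc.le hlam hα hC
    hψ hobs
  have hbdd := norm_birkhoffSum_le_of_net (by positivity) hα.le hN hloc hM
  have hconst : H * C + 2 * (M * N + H * C * δ₀ ^ α) / δ₀ ^ α ≤
      (3 * H + 2 * M / δ₀ ^ α) * (C + N) := by
    have hMδ : 0 ≤ 2 * M / δ₀ ^ α := by positivity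
    calc H * C + 2 * (M * N + H * C * δ₀ ^ α) / δ₀ ^ α = 3 * H * C + 2 * M / δ₀ ^ α * N := by
          field_simp; ring
      _ ≤ (3 * H + 2 * M / δ₀ ^ α) * (C + N) := by
          nlinarith [mul_nonneg hH.le hN0, mul_nonneg hMδ hC]
  exact (norm_birkhoffSum_sub_le_of_bounded (by positivity) hδ₀ hα.le hloc hbdd m n).trans
    (by gcongr)

end Dynamics

theorem comp_sub_eq_of_eq_birkhoffSum_orbit {X E : Type*} [TopologicalSpace X]
    [TopologicalSpace E] [AddCommGroup E] [IsTopologicalAddGroup E] [T2Space E] {T : X → X}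
    (hT : Continuous T) {x₀ : X} (hx₀ : Dense (Set.range fun n => T^[n] x₀)) {φ ψ : X → E}
    (hφ : Continuous φ) (hψ : Continuous ψ) (horbit : ∀ n, φ (T^[n] x₀) = birkhoffSum T ψ n x₀)
    (x : X) : φ (T x) - φ x = ψ x := by
  refine congrFun (Continuous.ext_on hx₀ ((hφ.comp hT).sub hφ) hψ ?_) x
  rintro _ ⟨n, rfl⟩
  show φ (T (T^[n] x₀)) - φ (T^[n] x₀) = ψ (T^[n] x₀)
  rw [← Function.iterate_succ_apply' T n x₀, horbit, horbit, birkhoffSum_succ, add_sub_cancel_left]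

theorem livsic_complex_with_estimate_general
    {X : Type*} [MetricSpace X] [CompactSpace X]
    (T : X → X) (hT : IsHomeomorph T)
    (htrans : ∃ x₀ : X, Dense (Set.range fun n : ℕ => T^[n] x₀))
    (hclosing : ∃ c lam δ₀ : ℝ, 0 < c ∧ 0 < lam ∧ 0 < δ₀ ∧
      ∀ (x : X) (k : ℕ), dist x (T^[k] x) < δ₀ →
        ∃ p : X, T^[k] p = p ∧ ∀ j ≤ k,
          dist (T^[j] x) (T^[j] p) ≤
            c * dist x (T^[k] x) * Real.exp (-lam * (min j (k - j) : ℕ)))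
    (α : ℝ) (hα : α ∈ Set.Ioc (0 : ℝ) 1) :
    ∃ K > 0, ∀ ψ : X → ℂ,
      (∃ C > 0, ∀ x y : X, ‖ψ x - ψ y‖ ≤ C * dist x y ^ α) →
      (∀ (p : X) (k : ℕ), 1 ≤ k → T^[k] p = p →
        ∑ j ∈ Finset.range k, ψ (T^[j] p) = 0) →
      ∃ φ : X → ℂ,
        (∀ x y : X, ‖φ x - φ y‖ ≤
          K * (sInf {C : ℝ | 0 ≤ C ∧
                ∀ x y : X, ‖ψ x - ψ y‖ ≤ C * dist x y ^ α}
              + ⨆ z : X, ‖ψ z‖) * dist x y ^ α) ∧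
        ∀ x : X, φ (T x) - φ x = ψ x := by
  obtain ⟨x₀, hx₀⟩ := htrans
  obtain ⟨c, lam, δ₀, hc, hlam, hδ₀, hcl⟩ := hclosing
  obtain ⟨M, hM⟩ := DenseRange.exists_le_dist_lt hx₀ hδ₀
  have hα0 : 0 < α := hα.1
  refine ⟨3 * shadowingConst c lam α + 2 * M / δ₀ ^ α,
    by have := shadowingConst_pos hc hlam hα0; positivity, fun ψ hψ hobs => ?_⟩
  obtain ⟨C₀, hC₀, hψC₀⟩ := hψ
  set C := sInf {C : ℝ | 0 ≤ C ∧ ∀ x y : X, ‖ψ x - ψ y‖ ≤ C * dist x y ^ α}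
  set N := ⨆ z : X, ‖ψ z‖
  have hψC : ∀ x y, ‖ψ x - ψ y‖ ≤ C * dist x y ^ α :=
    norm_sub_le_sInf_mul_rpow ⟨C₀, hC₀.le, hψC₀⟩
  have hC : 0 ≤ C := le_csInf ⟨C₀, hC₀.le, hψC₀⟩ fun _ h => h.1
  have hψcont : Continuous ψ := (uniformContinuous_of_dist_le_mul_rpow hα0
    (B := C₀) fun x y => by rw [dist_eq_norm]; exact hψC₀ x y).continuous
  have hN : ∀ z, ‖ψ z‖ ≤ N := le_ciSup (isCompact_range hψcont.norm).bddAbove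
  have hobs' : ∀ p k, T^[k] p = p → birkhoffSum T ψ k p = 0 := fun p k hp =>
    k.eq_zero_or_pos.elim (fun hk => hk ▸ birkhoffSum_zero T ψ p) fun hk => hobs p k hk hp
  obtain ⟨φ, hφorbit, hφ⟩ := DenseRange.exists_extend_of_dist_le_mul_rpow hx₀ hα0 fun m n =>
    (dist_eq_norm _ _).trans_le
      (norm_birkhoffSum_sub_le_of_closing hcl hc hlam hδ₀ hα0 hC hψC hobs' hN hM m n)
  refine ⟨φ, fun x y => ?_, comp_sub_eq_of_eq_birkhoffSum_orbit hT.continuous hx₀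
    (uniformContinuous_of_dist_le_mul_rpow hα0 hφ).continuous hψcont hφorbit⟩
  rw [← dist_eq_norm]
  exact hφ x y

/-- **Livšic's theorem with estimates.**
There is a constant `K`, depending only on `X`, `T` and `α`, such that every
α-Hölder-continuous `ψ : X → ℂ` satisfying the periodic orbit obstruction admits an
α-Hölder-continuous solution `φ` of `φ ∘ T - φ = ψ` with `[φ]_α ≤ K ([ψ]_α + ‖ψ‖)`. -/
theorem livsic_complex_with_estimate
    {X : Type*} [MetricSpace X] [CompactSpace X]
    (hdiam : Metric.diam (Set.univ : Set X) ≤ 1)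
    (T : X → X) (hT : IsHomeomorph T)
    (htrans : ∃ x₀ : X, Dense (Set.range fun n : ℕ => T^[n] x₀))
    (hclosing : ∃ c lam δ₀ : ℝ, 0 < c ∧ 0 < lam ∧ 0 < δ₀ ∧
      ∀ (x : X) (k : ℕ), dist x (T^[k] x) < δ₀ →
        ∃ p : X, T^[k] p = p ∧ ∀ j ≤ k,
          dist (T^[j] x) (T^[j] p) ≤
            c * dist x (T^[k] x) * Real.exp (-lam * (min j (k - j) : ℕ)))
    (α : ℝ) (hα : α ∈ Set.Ioc (0 : ℝ) 1) :
    ∃ K > 0, ∀ ψ : X → ℂ,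
      (∃ C > 0, ∀ x y : X, ‖ψ x - ψ y‖ ≤ C * dist x y ^ α) →
      (∀ (p : X) (k : ℕ), 1 ≤ k → T^[k] p = p →
        ∑ j ∈ Finset.range k, ψ (T^[j] p) = 0) →
      ∃ φ : X → ℂ,
        (∀ x y : X, ‖φ x - φ y‖ ≤
          K * (sInf {C : ℝ | 0 ≤ C ∧
                ∀ x y : X, ‖ψ x - ψ y‖ ≤ C * dist x y ^ α}
              + ⨆ z : X, ‖ψ z‖) * dist x y ^ α) ∧
        ∀ x : X, φ (T x) - φ x = ψ x :=
  livsic_complex_with_estimate_general T hT htrans hclosing α hα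
end

section
/- Let X be a metric space, T : X → X a map, α ∈ (0,1], and let ψ : X → ℂ be a (C,α)-Hölder-continuous function. Suppose x, p ∈ X, k ≥ 1, δ > 0 and λ > 0 are such that dist(T^j x, T^j p) ≤ δ·e^{−λ·min(j, k−j)} for all 0 ≤ j ≤ k. Then |Σ_{j=0}^{k−1} (ψ(T^j x) − ψ(T^j p))| ≤ 2·C·δ^α / (1 − e^{−λα}). -/
/-!
Each term of the Birkhoff sum is bounded by Hölder continuity:
`‖ψ (T^[j] x) - ψ (T^[j] p)‖ ≤ C δ^α r^{min(j, k-j)}` with `r = e^{-λα} < 1`.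
Bounding `r^{min(j, k-j)} ≤ r^j + r^{k-j}` splits the sum into two geometric series,
one decaying from each end of the orbit segment, each at most `1 / (1 - r)`.
-/

open Finset

section GeometricSums

variable {K : Type*} [Field K] [LinearOrder K] [IsStrictOrderedRing K] {r : K}

theorem geom_sum_range_le_of_lt_one (hr₀ : 0 ≤ r) (hr₁ : r < 1) (n : ℕ) :
    ∑ j ∈ range n, r ^ j ≤ 1 / (1 - r) := by
  rw [range_eq_Ico]
  simpa using geom_sum_Ico_le_of_lt_one (m := 0) (n := n) hr₀ hr₁

theorem pow_min_le_pow_add_pow (hr₀ : 0 ≤ r) (a b : ℕ) :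
    r ^ min a b ≤ r ^ a + r ^ b := by
  rcases min_choice a b with h | h <;> rw [h]
  · exact le_add_of_nonneg_right (pow_nonneg hr₀ b)
  · exact le_add_of_nonneg_left (pow_nonneg hr₀ a)

theorem sum_range_pow_sub_le_of_lt_one (hr₀ : 0 ≤ r) (hr₁ : r < 1) (k : ℕ) :
    ∑ j ∈ range k, r ^ (k - j) ≤ 1 / (1 - r) :=
  calc ∑ j ∈ range k, r ^ (k - j)
      ≤ ∑ j ∈ range (k + 1), r ^ (k - j) :=
        sum_le_sum_of_subset_of_nonneg (range_subset_range.2 k.le_succ)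
          fun _ _ _ => pow_nonneg hr₀ _
    _ = ∑ j ∈ range (k + 1), r ^ j := sum_range_reflect (r ^ ·) (k + 1)
    _ ≤ 1 / (1 - r) := geom_sum_range_le_of_lt_one hr₀ hr₁ _

theorem sum_range_pow_min_le_of_lt_one (hr₀ : 0 ≤ r) (hr₁ : r < 1) (k : ℕ) :
    ∑ j ∈ range k, r ^ min j (k - j) ≤ 2 / (1 - r) :=
  calc ∑ j ∈ range k, r ^ min j (k - j)
      ≤ ∑ j ∈ range k, (r ^ j + r ^ (k - j)) :=
        sum_le_sum fun j _ => pow_min_le_pow_add_pow hr₀ j (k - j)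
    _ = ∑ j ∈ range k, r ^ j + ∑ j ∈ range k, r ^ (k - j) := sum_add_distrib
    _ ≤ 1 / (1 - r) + 1 / (1 - r) :=
        add_le_add (geom_sum_range_le_of_lt_one hr₀ hr₁ k)
          (sum_range_pow_sub_le_of_lt_one hr₀ hr₁ k)
    _ = 2 / (1 - r) := by ring

end GeometricSums

theorem Real.mul_exp_mul_natCast_rpow {δ : ℝ} (hδ : 0 ≤ δ) (c α : ℝ) (m : ℕ) :
    (δ * Real.exp (c * m)) ^ α = δ ^ α * Real.exp (c * α) ^ m := by
  rw [Real.mul_rpow hδ (Real.exp_pos _).le, ← Real.exp_mul, ← Real.exp_nat_mul]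
  ring_nf

theorem norm_sub_le_of_holder_of_dist_le {X E : Type*} [PseudoMetricSpace X]
    [SeminormedAddCommGroup E] {ψ : X → E} {C α ε : ℝ} (hC : 0 ≤ C) (hα : 0 ≤ α)
    (hψ : ∀ x y : X, ‖ψ x - ψ y‖ ≤ C * dist x y ^ α) {x y : X} (hxy : dist x y ≤ ε) :
    ‖ψ x - ψ y‖ ≤ C * ε ^ α :=
  (hψ x y).trans <| mul_le_mul_of_nonneg_left (Real.rpow_le_rpow dist_nonneg hxy hα) hC

theorem birkhoff_sums_close_of_orbits_close_general
    {X : Type*} [MetricSpace X] (T : X → X)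
    (C α : ℝ) (hC : 0 < C) (hα : α ∈ Set.Ioc (0 : ℝ) 1)
    (ψ : X → ℂ)
    (hψ : ∀ x y : X, ‖ψ x - ψ y‖ ≤ C * dist x y ^ α)
    (x p : X) (k : ℕ) (δ lam : ℝ) (hδ : 0 < δ) (hlam : 0 < lam)
    (hclose : ∀ j ≤ k,
      dist (T^[j] x) (T^[j] p) ≤ δ * Real.exp (-lam * (min j (k - j) : ℕ))) :
    ‖∑ j ∈ Finset.range k, (ψ (T^[j] x) - ψ (T^[j] p))‖
      ≤ 2 * C * δ ^ α / (1 - Real.exp (-lam * α)) := by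
  set r := Real.exp (-lam * α)
  have hr₁ : r < 1 := Real.exp_lt_one_iff.2 (by nlinarith [hα.1])
  have hterm : ∀ j ∈ range k, ‖ψ (T^[j] x) - ψ (T^[j] p)‖ ≤ C * δ ^ α * r ^ min j (k - j) :=
    fun j hj => by
      simpa only [Real.mul_exp_mul_natCast_rpow hδ.le, mul_assoc] using
        norm_sub_le_of_holder_of_dist_le hC.le hα.1.le hψ
          (hclose j (mem_range.1 hj).le)
  calc ‖∑ j ∈ range k, (ψ (T^[j] x) - ψ (T^[j] p))‖
      ≤ ∑ j ∈ range k, C * δ ^ α * r ^ min j (k - j) :=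
        (norm_sum_le _ _).trans (sum_le_sum hterm)
    _ = C * δ ^ α * ∑ j ∈ range k, r ^ min j (k - j) := (mul_sum _ _ _).symm
    _ ≤ C * δ ^ α * (2 / (1 - r)) :=
        mul_le_mul_of_nonneg_left (sum_range_pow_min_le_of_lt_one (Real.exp_pos _).le hr₁ k)
          (mul_nonneg hC.le (Real.rpow_nonneg hδ.le α))
    _ = 2 * C * δ ^ α / (1 - r) := by ring

/-- If two orbit segments of length `k` are exponentially `δ`-close
with exponent `λ`, then the Birkhoff sums of a `(C, α)`-Hölder function `ψ` along the
two segments differ by at most `2 C δ^α / (1 - e^{-λα})`. -/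
theorem birkhoff_sums_close_of_orbits_close
    {X : Type*} [MetricSpace X] (T : X → X)
    (C α : ℝ) (hC : 0 < C) (hα : α ∈ Set.Ioc (0 : ℝ) 1)
    (ψ : X → ℂ)
    (hψ : ∀ x y : X, ‖ψ x - ψ y‖ ≤ C * dist x y ^ α)
    (x p : X) (k : ℕ) (hk : 1 ≤ k) (δ lam : ℝ) (hδ : 0 < δ) (hlam : 0 < lam)
    (hclose : ∀ j ≤ k,
      dist (T^[j] x) (T^[j] p) ≤ δ * Real.exp (-lam * (min j (k - j) : ℕ))) :
    ‖∑ j ∈ Finset.range k, (ψ (T^[j] x) - ψ (T^[j] p))‖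
      ≤ 2 * C * δ ^ α / (1 - Real.exp (-lam * α)) :=
  birkhoff_sums_close_of_orbits_close_general T C α hC hα ψ hψ x p k δ lam hδ hlam hclose
end
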